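/- arXiv:math/0601484 — 2 statements merged into one kernel-verified Lean document; each statement's English description precedes it below -/
import Mathlib

section
/- Let V be a finite-dimensional real inner product space, p ≥ 1, let φ be an alternating p-form on V of comass at most one, let e = (e_1,…,e_p) be a φ-plane, and let v, w ∈ V. Let A = v∘w be the symmetric endomorphism A(x) = ½(⟨w,x⟩ v + ⟨v,x⟩ w), and let P denote the orthogonal projection of V onto span{e_1,…,e_p}. Then (λ_φ A)(e_1,…,e_p) = ⟨P v, P w⟩. -/
open scoped RealInnerProductSpace

/-!
The `φ`-plane `e` maximizes `φ` among orthonormal frames, so the first variation of `φ` at `e`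
vanishes: for a unit vector `u` orthogonal to all `e i` and `a² + b² = 1`, replacing `e j` by
`a • e j + b • u` keeps the frame orthonormal, whence `a + b φ(e[j ↦ u]) ≤ 1`, which forces
`φ(e[j ↦ u]) = 0`. Splitting `x` into its components along the `e i` and orthogonal to them then
gives `φ(e[j ↦ x]) = ⟪e j, x⟫`, so `(λ_φ A)(e) = ∑ j ⟪e j, A e j⟫ = ∑ j ⟪e j, v⟫ ⟪e j, w⟫`, and
the latter is `⟪P v, P w⟫` since `P x = ∑ i ⟪e i, x⟫ e i`.
-/

theorem eq_zero_of_forall_sq_add_sq_eq_one_add_mul_le_one {c : ℝ}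
    (h : ∀ a b : ℝ, a ^ 2 + b ^ 2 = 1 → a + b * c ≤ 1) : c = 0 := by
  set s := √(1 + c ^ 2)
  have hs : s ^ 2 = 1 + c ^ 2 := Real.sq_sqrt (by positivity)
  have hs0 : 0 < s := by positivity
  have hle := h (1 / s) (c / s) (by field_simp; linarith)
  have heq : 1 / s + c / s * c = s := by field_simp; linarith
  nlinarith

section Orthonormal

variable {𝕜 E ι : Type*} [RCLike 𝕜] [NormedAddCommGroup E] [InnerProductSpace 𝕜 E]
  {e : ι → E}

open scoped InnerProductSpace

theorem Orthonormal.update [DecidableEq ι] (he : Orthonormal 𝕜 e) {j : ι} {g : E} (hg : ‖g‖ = 1)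
    (hgo : ∀ i ≠ j, ⟪e i, g⟫_𝕜 = 0) : Orthonormal 𝕜 (Function.update e j g) := by
  refine ⟨fun i => ?_, fun i k hik => ?_⟩
  · rcases eq_or_ne i j with rfl | hi
    · simpa
    · simpa [hi] using he.1 i
  · rcases eq_or_ne i j with rfl | hi
    · simpa [hik.symm, inner_eq_zero_symm] using hgo k hik.symm
    · rcases eq_or_ne k j with rfl | hk
      · simpa [hi] using hgo i hi
      · simpa [hi, hk] using he.2 hik

theorem Orthonormal.starProjection_span_range_apply [Fintype ι] (he : Orthonormal 𝕜 e)
    [(Submodule.span 𝕜 (Set.range e)).HasOrthogonalProjection] (x : E) :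
    (Submodule.span 𝕜 (Set.range e)).starProjection x = ∑ i, ⟪e i, x⟫_𝕜 • e i := by
  refine Submodule.eq_starProjection_of_mem_orthogonal
    (Submodule.sum_mem _ fun i _ => Submodule.smul_mem _ _ (Submodule.subset_span ⟨i, rfl⟩)) ?_
  rw [← Submodule.span_singleton_le_iff_mem, ← Submodule.isOrtho_iff_le, Submodule.isOrtho_span]
  rintro _ rfl _ ⟨i, rfl⟩
  rw [inner_eq_zero_symm, inner_sub_right, he.inner_right_fintype, sub_self]

end Orthonormal

theorem AlternatingMap.map_update_eq_ite {R M N ι : Type*} [Semiring R] [AddCommMonoid M]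
    [Module R M] [AddCommMonoid N] [Module R N] [DecidableEq ι]
    (φ : M [⋀^ι]→ₗ[R] N) (v : ι → M) (i j : ι) :
    φ (Function.update v j (v i)) = if i = j then φ v else 0 := by
  split_ifs with hij
  · rw [hij, Function.update_eq_self]
  · exact φ.map_eq_zero_of_eq _ (i := i) (j := j) (by simp [hij]) hij

namespace AlternatingMap

variable {V ι : Type*} [NormedAddCommGroup V] [InnerProductSpace ℝ V] [DecidableEq ι]
  {φ : V [⋀^ι]→ₗ[ℝ] ℝ} {e : ι → V}

theorem map_update_eq_zero_of_forall_inner_eq_zero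
    (hcomass : ∀ u : ι → V, Orthonormal ℝ u → φ u ≤ 1) (he : Orthonormal ℝ e) (heφ : φ e = 1)
    (j : ι) {x : V} (hx : ∀ i, ⟪e i, x⟫ = 0) : φ (Function.update e j x) = 0 := by
  rcases eq_or_ne x 0 with rfl | hx0
  · exact φ.map_update_zero e j
  set u := ‖x‖⁻¹ • x
  have hu : ‖u‖ = 1 := norm_smul_inv_norm hx0
  have hxu : x = ‖x‖ • u := by simp [u, smul_smul, hx0]
  have hue : ∀ i, ⟪e i, u⟫ = 0 := fun i => by simp [u, inner_smul_right, hx i]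
  suffices φ (Function.update e j u) = 0 by rw [hxu, φ.map_update_smul, this, smul_zero]
  refine eq_zero_of_forall_sq_add_sq_eq_one_add_mul_le_one fun a b hab => ?_
  have hunit : ‖a • e j + b • u‖ = 1 := by
    rw [← pow_eq_one_iff_of_nonneg (norm_nonneg _) two_ne_zero, norm_add_sq_real,
      real_inner_smul_left, real_inner_smul_right, hue j, norm_smul, norm_smul, he.1 j, hu,
      Real.norm_eq_abs, Real.norm_eq_abs]
    simpa [mul_pow] using hab
  have horth : ∀ i ≠ j, ⟪e i, a • e j + b • u⟫ = 0 := fun i hij => by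
    simp [inner_add_right, inner_smul_right, hue i, he.inner_eq_zero hij]
  calc a + b * φ (Function.update e j u)
      = φ (Function.update e j (a • e j + b • u)) := by
        simp [φ.map_update_add, φ.map_update_smul, heφ]
    _ ≤ 1 := hcomass _ (he.update hunit horth)

theorem map_update_eq_inner [Fintype ι]
    (hcomass : ∀ u : ι → V, Orthonormal ℝ u → φ u ≤ 1) (he : Orthonormal ℝ e) (heφ : φ e = 1)
    (j : ι) (x : V) : φ (Function.update e j x) = ⟪e j, x⟫ := by
  set y := ∑ i, ⟪e i, x⟫ • e i
  have hperp : ∀ i, ⟪e i, x - y⟫ = 0 := fun i => by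
    rw [inner_sub_right, he.inner_right_fintype, sub_self]
  calc φ (Function.update e j x)
      = φ (Function.update e j y) + φ (Function.update e j (x - y)) := by
        rw [← φ.map_update_add, add_sub_cancel]
    _ = ⟪e j, x⟫ := by
        simp [y, φ.map_update_sum, φ.map_update_smul, φ.map_update_eq_ite, heφ,
          map_update_eq_zero_of_forall_inner_eq_zero hcomass he heφ j hperp]

end AlternatingMap

theorem lambda_phi_sym_product_general
    {V : Type*} [NormedAddCommGroup V] [InnerProductSpace ℝ V]
    [FiniteDimensional ℝ V] {p : ℕ}
    (φ : V [⋀^Fin p]→ₗ[ℝ] ℝ)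
    (hcomass : ∀ u : Fin p → V, Orthonormal ℝ u → φ u ≤ 1)
    (e : Fin p → V) (he : Orthonormal ℝ e) (heφ : φ e = 1)
    (v w : V) (A : V →ₗ[ℝ] V)
    (hA : ∀ x, A x = (1 / 2 : ℝ) • (⟪w, x⟫ • v + ⟪v, x⟫ • w)) :
    ∑ j, φ (Function.update e j (A (e j))) =
      ⟪((Submodule.orthogonalProjectionOnto (Submodule.span ℝ (Set.range e)) v : _) : V),
        ((Submodule.orthogonalProjectionOnto (Submodule.span ℝ (Set.range e)) w : _) : V)⟫ := by
  simp only [← Submodule.starProjection_apply, he.starProjection_span_range_apply,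
    he.inner_sum, AlternatingMap.map_update_eq_inner hcomass he heφ, hA]
  refine Finset.sum_congr rfl fun j _ => ?_
  simp only [inner_smul_right, inner_add_right, real_inner_comm, conj_trivial]
  ring

/-- **Lemma 2.B.2** (Harvey–Lawson).  For a comass-one form `φ`, a `φ`-plane `e`, vectors
`v, w`, and the symmetric endomorphism `A = v∘w`, `A(x) = ½(⟨w,x⟩v + ⟨v,x⟩w)`, one has
`λ_φ(A)(e) = ⟨P v, P w⟩` where `P` is the orthogonal projection onto `span{e_1,…,e_p}`. -/
theorem lambda_phi_sym_product
    {V : Type*} [NormedAddCommGroup V] [InnerProductSpace ℝ V]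
    [FiniteDimensional ℝ V] {p : ℕ} (hp : 1 ≤ p)
    (φ : V [⋀^Fin p]→ₗ[ℝ] ℝ)
    (hcomass : ∀ u : Fin p → V, Orthonormal ℝ u → φ u ≤ 1)
    (e : Fin p → V) (he : Orthonormal ℝ e) (heφ : φ e = 1)
    (v w : V) (A : V →ₗ[ℝ] V)
    (hA : ∀ x, A x = (1 / 2 : ℝ) • (⟪w, x⟫ • v + ⟪v, x⟫ • w)) :
    ∑ j, φ (Function.update e j (A (e j))) =
      ⟪((Submodule.orthogonalProjectionOnto (Submodule.span ℝ (Set.range e)) v : _) : V),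
        ((Submodule.orthogonalProjectionOnto (Submodule.span ℝ (Set.range e)) w : _) : V)⟫ :=
  lambda_phi_sym_product_general φ hcomass e he heφ v w A hA
end

section
/- Let V be a finite-dimensional real inner product space, p ≥ 1, let φ be an alternating p-form on V of comass at most one, and let U ⊆ V be open. Then the following are equivalent: (1) for every compact set K ⊆ U, the (U,φ)-convex hull K̂ is compact; (2) there exists a smooth φ-plurisubharmonic proper exhaustion function f : U → ℝ, i.e. a smooth φ-plurisubharmonic f with {x ∈ U : f(x) ≤ c} compact for every c ∈ ℝ. (U is then called φ-convex.) -/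
open scoped RealInnerProductSpace

/-- `f` is smooth and `φ`-plurisubharmonic on the open set `U`: the trace of its Hessian on
every `φ`-plane is nonnegative at every point of `U`. -/
def PshOn {V : Type*} [NormedAddCommGroup V] [InnerProductSpace ℝ V]
    {p : ℕ} (φ : V [⋀^Fin p]→ₗ[ℝ] ℝ) (U : Set V) (f : V → ℝ) : Prop :=
  ContDiffOn ℝ (⊤ : ℕ∞) f U ∧
  ∀ x ∈ U, ∀ e : Fin p → V, Orthonormal ℝ e → φ e = 1 →
    0 ≤ ∑ j, fderiv ℝ (fderiv ℝ f) x (e j) (e j)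

/-- The `(U,φ)`-convex hull of a compact subset `K` of `U`. -/
def PshHull {V : Type*} [NormedAddCommGroup V] [InnerProductSpace ℝ V]
    {p : ℕ} (φ : V [⋀^Fin p]→ₗ[ℝ] ℝ) (U : Set V) (K : Set V) : Set V :=
  {x ∈ U | ∀ f : V → ℝ, PshOn φ U f → f x ≤ sSup (f '' K)}

/-!
If `f` is a `φ`-plurisubharmonic proper exhaustion function, the hull of `K` is a closed subset
of the compact sublevel set `{f ≤ sup_K f}`.

Conversely, if hulls of compact sets are compact, `U` is exhausted by hulls `K_j` with
`K_j ⊆ int K_{j+1}`. A point outside `K_j` is separated from it by a plurisubharmonic function;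
composing with a smooth convex nondecreasing function that vanishes on `(-∞, 0]` and summing
over a finite cover of the compact shell `K_{j+2} \ int K_{j+1}` yields a plurisubharmonic
`χ_j ≥ 0` vanishing on `K_j` and `≥ j` on that shell. The sum `∑ χ_j` is locally finite, hence
smooth and plurisubharmonic, and it is `≥ j` off `int K_{j+1}`.
-/

open Set Filter
open scoped ContDiff Topology

section Hessian

variable {E : Type*} [NormedAddCommGroup E] [NormedSpace ℝ E] {x : E}

theorem fderiv_fderiv_sum {ι : Type*} (s : Finset ι) {F : ι → E → ℝ}
    (hF : ∀ i ∈ s, ContDiffAt ℝ 2 (F i) x) :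
    fderiv ℝ (fderiv ℝ fun y => ∑ i ∈ s, F i y) x = ∑ i ∈ s, fderiv ℝ (fderiv ℝ (F i)) x := by
  have hnear : ∀ᶠ y in 𝓝 x, ∀ i ∈ s, ContDiffAt ℝ 2 (F i) y :=
    (Filter.eventually_all_finset s).2 fun i hi => (hF i hi).eventually (by simp)
  have hfderiv : fderiv ℝ (fun y => ∑ i ∈ s, F i y) =ᶠ[𝓝 x]
      fun y => ∑ i ∈ s, fderiv ℝ (F i) y := by
    filter_upwards [hnear] with y hy
    exact fderiv_fun_sum fun i hi => (hy i hi).differentiableAt (by simp)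
  rw [hfderiv.fderiv_eq]
  exact fderiv_fun_sum fun i hi =>
    ((hF i hi).fderiv_right (m := 1) (by norm_num)).differentiableAt one_ne_zero

theorem fderiv_fderiv_comp_apply {f : E → ℝ} {ψ : ℝ → ℝ} (hf : ContDiffAt ℝ 2 f x)
    (hψ : ContDiff ℝ 2 ψ) (v w : E) :
    fderiv ℝ (fderiv ℝ (ψ ∘ f)) x v w =
      deriv ψ (f x) * fderiv ℝ (fderiv ℝ f) x v w +
        deriv (deriv ψ) (f x) * (fderiv ℝ f x v * fderiv ℝ f x w) := by
  have hψ' : Differentiable ℝ (deriv ψ) :=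
    ((contDiff_succ_iff_deriv (n := 1)).1 hψ).2.2.differentiable one_ne_zero
  have hfderiv : fderiv ℝ (ψ ∘ f) =ᶠ[𝓝 x] fun y => deriv ψ (f y) • fderiv ℝ f y := by
    filter_upwards [hf.eventually (by simp)] with y hy
    exact ((hψ.differentiable (by simp) (f y)).hasDerivAt.comp_hasFDerivAt y
      (hy.differentiableAt (by simp)).hasFDerivAt).fderiv
  have hc : HasFDerivAt (fun y => deriv ψ (f y)) (deriv (deriv ψ) (f x) • fderiv ℝ f x) x :=
    (hψ' (f x)).hasDerivAt.comp_hasFDerivAt x (hf.differentiableAt (by simp)).hasFDerivAt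
  rw [hfderiv.fderiv_eq, fderiv_fun_smul hc.differentiableAt
    ((hf.fderiv_right (m := 1) (by norm_num)).differentiableAt one_ne_zero), hc.fderiv]
  simp only [add_apply, smul_apply, ContinuousLinearMap.smulRight_apply, smul_eq_mul]
  ring

end Hessian

section Psh

variable {V : Type*} [NormedAddCommGroup V] [InnerProductSpace ℝ V] {p : ℕ}
  {φ : V [⋀^Fin p]→ₗ[ℝ] ℝ} {U : Set V} {f : V → ℝ} {x : V}

theorem PshOn.contDiffAt (hU : IsOpen U) (hf : PshOn φ U f) (hx : x ∈ U) :
    ContDiffAt ℝ 2 f x :=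
  (hf.1.contDiffAt (hU.mem_nhds hx)).of_le (WithTop.coe_le_coe.2 le_top)

theorem PshOn.sum (hU : IsOpen U) {ι : Type*} (s : Finset ι) {F : ι → V → ℝ}
    (hF : ∀ i ∈ s, PshOn φ U (F i)) : PshOn φ U fun y => ∑ i ∈ s, F i y := by
  refine ⟨ContDiffOn.sum fun i hi => (hF i hi).1, fun x hx e he hφe => ?_⟩
  rw [fderiv_fderiv_sum s fun i hi => (hF i hi).contDiffAt hU hx]
  simp only [sum_apply]
  rw [Finset.sum_comm]
  exact Finset.sum_nonneg fun i hi => (hF i hi).2 x hx e he hφe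

theorem PshOn.const_mul (hf : PshOn φ U f) {c : ℝ} (hc : 0 ≤ c) :
    PshOn φ U fun y => c * f y := by
  refine ⟨contDiffOn_const.mul hf.1, fun x hx e he hφe => ?_⟩
  have hD2 : fderiv ℝ (fderiv ℝ (c • f)) = c • fderiv ℝ (fderiv ℝ f) := by
    rw [fderiv_const_smul_field]
    exact fderiv_const_smul_field (f := fderiv ℝ f) c
  change 0 ≤ ∑ j, fderiv ℝ (fderiv ℝ (c • f)) x (e j) (e j)
  simp only [hD2, Pi.smul_apply, smul_apply, smul_eq_mul, ← Finset.mul_sum]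
  exact mul_nonneg hc (hf.2 x hx e he hφe)

theorem PshOn.sub_const (hf : PshOn φ U f) (c : ℝ) : PshOn φ U fun y => f y - c := by
  refine ⟨hf.1.sub contDiffOn_const, fun x hx e he hφe => ?_⟩
  rw [show fderiv ℝ (fun y => f y - c) = fderiv ℝ f from funext fun y => fderiv_sub_const c]
  exact hf.2 x hx e he hφe

theorem PshOn.comp (hU : IsOpen U) (hf : PshOn φ U f) {ψ : ℝ → ℝ} (hψ : ContDiff ℝ ∞ ψ)
    (hψ' : ∀ t, 0 ≤ deriv ψ t) (hψ'' : ∀ t, 0 ≤ deriv (deriv ψ) t) : PshOn φ U (ψ ∘ f) := by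
  refine ⟨hψ.comp_contDiffOn hf.1, fun x hx e he hφe => ?_⟩
  have hψ2 : ContDiff ℝ 2 ψ := hψ.of_le (WithTop.coe_le_coe.2 le_top)
  simp only [fderiv_fderiv_comp_apply (hf.contDiffAt hU hx) hψ2, Finset.sum_add_distrib,
    ← Finset.mul_sum]
  exact add_nonneg (mul_nonneg (hψ' _) (hf.2 x hx e he hφe))
    (mul_nonneg (hψ'' _) (Finset.sum_nonneg fun j _ => mul_self_nonneg _))

theorem pshOn_of_locally (hU : IsOpen U) (h : ∀ x ∈ U, ∃ g, PshOn φ U g ∧ f =ᶠ[𝓝 x] g) :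
    PshOn φ U f := by
  refine ⟨fun x hx => ?_, fun x hx e he hφe => ?_⟩ <;> obtain ⟨g, hg, hfg⟩ := h x hx
  · exact ((hg.1.contDiffAt (hU.mem_nhds hx)).congr_of_eventuallyEq hfg).contDiffWithinAt
  · rw [hfg.fderiv.fderiv_eq]
    exact hg.2 x hx e he hφe

end Psh

structure IsSmoothRamp (h : ℝ → ℝ) : Prop where
  contDiff : ContDiff ℝ ∞ h
  eq_zero : ∀ t ≤ 0, h t = 0
  pos : ∀ t, 0 < t → 0 < h t

theorem isSmoothRamp_expNegInvGlue : IsSmoothRamp expNegInvGlue :=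
  ⟨expNegInvGlue.contDiff, fun _ => expNegInvGlue.zero_of_nonpos,
    fun _ => expNegInvGlue.pos_of_pos⟩

namespace IsSmoothRamp

variable {h : ℝ → ℝ}

theorem nonneg (hh : IsSmoothRamp h) (t : ℝ) : 0 ≤ h t :=
  (le_or_gt t 0).elim (fun ht => (hh.eq_zero t ht).ge) fun ht => (hh.pos t ht).le

theorem deriv_primitive (hh : IsSmoothRamp h) : deriv (fun t => ∫ s in 0..t, h s) = h :=
  funext fun t => hh.contDiff.continuous.deriv_integral h 0 t

theorem primitive (hh : IsSmoothRamp h) : IsSmoothRamp fun t => ∫ s in 0..t, h s where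
  contDiff := contDiff_infty_iff_deriv.2
    ⟨fun t => (hh.contDiff.continuous.integral_hasStrictDerivAt 0 t).hasDerivAt.differentiableAt,
      by rw [hh.deriv_primitive]; exact hh.contDiff⟩
  eq_zero t ht := by
    rw [intervalIntegral.integral_congr (g := fun _ => 0), intervalIntegral.integral_zero]
    intro s hs
    rw [uIcc_of_ge ht] at hs
    exact hh.eq_zero s hs.2
  pos t ht := intervalIntegral.intervalIntegral_pos_of_pos_on
    (hh.contDiff.continuous.intervalIntegrable 0 t) (fun s hs => hh.pos s hs.1) ht

end IsSmoothRamp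

theorem exists_convex_isSmoothRamp :
    ∃ ψ : ℝ → ℝ, IsSmoothRamp ψ ∧ (∀ t, 0 ≤ deriv ψ t) ∧ ∀ t, 0 ≤ deriv (deriv ψ) t := by
  have h₁ := isSmoothRamp_expNegInvGlue.primitive
  refine ⟨_, h₁.primitive, fun t => ?_, fun t => ?_⟩
  · rw [h₁.deriv_primitive]
    exact h₁.nonneg t
  · rw [h₁.deriv_primitive, isSmoothRamp_expNegInvGlue.deriv_primitive]
    exact isSmoothRamp_expNegInvGlue.nonneg t

section Hull

variable {V : Type*} [NormedAddCommGroup V] [InnerProductSpace ℝ V] {p : ℕ}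
  {φ : V [⋀^Fin p]→ₗ[ℝ] ℝ} {U K : Set V}

theorem subset_pshHull (hKU : K ⊆ U) (hK : IsCompact K) : K ⊆ PshHull φ U K := fun x hx =>
  ⟨hKU hx, fun _ hf =>
    le_csSup ((hK.image_of_continuousOn (hf.1.continuousOn.mono hKU)).bddAbove) ⟨x, hx, rfl⟩⟩

theorem exists_psh_separating_of_notMem_pshHull {y : V} (hy : y ∈ U)
    (hyK : y ∉ PshHull φ U K) :
    ∃ g, PshOn φ U g ∧ (∀ z ∈ PshHull φ U K, g z ≤ 0) ∧ 0 < g y := by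
  obtain ⟨f, hf, hfy⟩ : ∃ f, PshOn φ U f ∧ sSup (f '' K) < f y := by
    simpa [PshHull, hy] using hyK
  exact ⟨fun z => f z - sSup (f '' K), hf.sub_const _, fun z hz => sub_nonpos.2 (hz.2 f hf),
    sub_pos.2 hfy⟩

theorem isCompact_pshHull_of_exhaustion {f₀ : V → ℝ} (hf₀ : PshOn φ U f₀)
    (hf₀c : ∀ c, IsCompact {x ∈ U | f₀ x ≤ c}) (K : Set V) : IsCompact (PshHull φ U K) := by
  set S := {x ∈ U | f₀ x ≤ sSup (f₀ '' K)}
  have hS : IsCompact S := hf₀c _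
  have hSU : S ⊆ U := fun x hx => hx.1
  have hhull : PshHull φ U K = S ∩ ⋂ f : {f // PshOn φ U f}, S ∩ f.1 ⁻¹' Iic (sSup (f.1 '' K)) := by
    ext x
    simp only [PshHull, mem_inter_iff, mem_iInter, mem_preimage, mem_Iic, S]
    exact ⟨fun hx => ⟨⟨hx.1, hx.2 f₀ hf₀⟩, fun f => ⟨⟨hx.1, hx.2 f₀ hf₀⟩, hx.2 f.1 f.2⟩⟩,
      fun hx => ⟨hx.1.1, fun f hf => (hx.2 ⟨f, hf⟩).2⟩⟩
  rw [hhull]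
  exact hS.inter_right (isClosed_iInter fun f =>
    (f.2.1.continuousOn.mono hSU).preimage_isClosed_of_isClosed hS.isClosed isClosed_Iic)

end Hull

section Cutoff

variable {V : Type*} [NormedAddCommGroup V] [InnerProductSpace ℝ V] {p : ℕ}
  {φ : V [⋀^Fin p]→ₗ[ℝ] ℝ} {U K : Set V}

theorem exists_psh_bump (hU : IsOpen U) {g : V → ℝ} {y : V} (hg : PshOn φ U g)
    (hgK : ∀ z ∈ K, g z ≤ 0) (hy : y ∈ U) (hgy : 0 < g y) :
    ∃ θ, PshOn φ U θ ∧ (∀ z, 0 ≤ θ z) ∧ (∀ z ∈ K, θ z = 0) ∧ ∀ᶠ z in 𝓝 y, 1 ≤ θ z := by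
  obtain ⟨ψ, hψ, hψ', hψ''⟩ := exists_convex_isSmoothRamp
  set a := 2 / ψ (g y / 2)
  have ha : 0 < a := div_pos two_pos (hψ.pos _ (half_pos hgy))
  have hθ : PshOn φ U fun z => a * ψ (g z - g y / 2) :=
    ((hg.sub_const _).comp hU hψ.contDiff hψ' hψ'').const_mul ha.le
  have hθy : a * ψ (g y - g y / 2) = 2 := by
    rw [sub_half]
    exact div_mul_cancel₀ 2 (hψ.pos _ (half_pos hgy)).ne'
  refine ⟨_, hθ, fun z => mul_nonneg ha.le (hψ.nonneg _), fun z hz => ?_, ?_⟩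
  · rw [hψ.eq_zero _ (by linarith [hgK z hz]), mul_zero]
  · exact (hθ.1.continuousOn.continuousAt (hU.mem_nhds hy)).eventually
      (Ici_mem_nhds (by beta_reduce; rw [hθy]; norm_num))

theorem exists_psh_cutoff (hU : IsOpen U) {A : Set V} (hA : IsCompact A) (hAU : A ⊆ U)
    (hsep : ∀ y ∈ A, ∃ g, PshOn φ U g ∧ (∀ z ∈ K, g z ≤ 0) ∧ 0 < g y) {c : ℝ} (hc : 0 ≤ c) :
    ∃ χ, PshOn φ U χ ∧ (∀ z, 0 ≤ χ z) ∧ (∀ z ∈ K, χ z = 0) ∧ ∀ z ∈ A, c ≤ χ z := by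
  have hbump (y : A) : ∃ θ, PshOn φ U θ ∧ (∀ z, 0 ≤ θ z) ∧ (∀ z ∈ K, θ z = 0) ∧
      ∀ᶠ z in 𝓝 (y : V), 1 ≤ θ z :=
    let ⟨_, hg, hgK, hgy⟩ := hsep y y.2
    exists_psh_bump hU hg hgK (hAU y.2) hgy
  choose θ hθ hθ0 hθK hθ1 using hbump
  obtain ⟨t, ht⟩ := hA.elim_nhds_subcover' (fun y hy => {z | 1 ≤ θ ⟨y, hy⟩ z})
    fun y hy => hθ1 ⟨y, hy⟩
  refine ⟨fun z => c * ∑ i ∈ t, θ i z, (PshOn.sum hU t fun i _ => hθ i).const_mul hc,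
    fun z => mul_nonneg hc (Finset.sum_nonneg fun i _ => hθ0 i z),
    fun z hz => by simp [hθK _ z hz], fun z hz => ?_⟩
  obtain ⟨i, hi, hzi⟩ := mem_iUnion₂.1 (ht hz)
  calc c = c * 1 := (mul_one c).symm
    _ ≤ c * ∑ i ∈ t, θ i z :=
      mul_le_mul_of_nonneg_left (le_trans hzi (Finset.single_le_sum (fun j _ => hθ0 j z) hi)) hc

end Cutoff

theorem IsOpen.exists_isCompact_cover {X : Type*} [TopologicalSpace X] [LocallyCompactSpace X]
    [SecondCountableTopology X] {U : Set X} (hU : IsOpen U) :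
    ∃ L : ℕ → Set X, (∀ n, IsCompact (L n)) ∧ (∀ n, L n ⊆ U) ∧
      ∀ S, IsCompact S → S ⊆ U → ∃ n, S ⊆ interior (L n) := by
  have := hU.locallyCompactSpace
  let L := CompactExhaustion.choice U
  refine ⟨fun n => (↑) '' L n, fun n => (L.isCompact n).image continuous_subtype_val,
    fun n => Subtype.coe_image_subset _ _, fun S hS hSU => ?_⟩
  obtain ⟨n, hn⟩ := L.exists_superset_of_isCompact
    (Topology.IsInducing.subtypeVal.isCompact_preimage' hS (by simpa using hSU))
  refine ⟨n + 1, fun x hx => hU.isOpenMap_subtype_val.image_interior_subset _ ?_⟩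
  exact ⟨⟨x, hSU hx⟩, L.subset_interior_succ n (hn hx), rfl⟩

theorem isCompact_sublevel_of_subset {X : Type*} [TopologicalSpace X] [T2Space X]
    {U K : Set X} {f : X → ℝ} (hK : IsCompact K) (hKU : K ⊆ U) (hf : ContinuousOn f U) {c : ℝ}
    (hsub : {x ∈ U | f x ≤ c} ⊆ K) : IsCompact {x ∈ U | f x ≤ c} := by
  have hsub' : {x ∈ U | f x ≤ c} = K ∩ f ⁻¹' Iic c :=
    subset_antisymm (fun x hx => ⟨hsub hx, hx.2⟩) fun x hx => ⟨hKU hx.1, hx.2⟩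
  rw [hsub']
  exact hK.of_isClosed_subset
    ((hf.mono hKU).preimage_isClosed_of_isClosed hK.isClosed isClosed_Iic) inter_subset_left

section Exhaustion

variable {V : Type*} [NormedAddCommGroup V] [InnerProductSpace ℝ V] {p : ℕ}
  {φ : V [⋀^Fin p]→ₗ[ℝ] ℝ} {U : Set V}

structure PshExhaustion (φ : V [⋀^Fin p]→ₗ[ℝ] ℝ) (U : Set V) where
  K : ℕ → Set V
  isCompact : ∀ j, IsCompact (K j)
  subset : ∀ j, K j ⊆ U
  subset_interior_succ : ∀ j, K j ⊆ interior (K (j + 1))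
  exists_mem : ∀ x ∈ U, ∃ j, x ∈ K j
  separates : ∀ j, ∀ y ∈ U, y ∉ K j → ∃ g, PshOn φ U g ∧ (∀ z ∈ K j, g z ≤ 0) ∧ 0 < g y

theorem exists_pshExhaustion [FiniteDimensional ℝ V] (hU : IsOpen U)
    (hhull : ∀ K : Set V, K ⊆ U → IsCompact K → IsCompact (PshHull φ U K)) :
    Nonempty (PshExhaustion φ U) := by
  obtain ⟨L, hLc, hLU, hL⟩ := hU.exists_isCompact_cover
  have hullU (n : ℕ) : PshHull φ U (L n) ⊆ U := fun _ hx => hx.1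
  choose N hN using fun j n => hL (PshHull φ U (L n) ∪ L j)
    ((hhull _ (hLU n) (hLc n)).union (hLc j)) (union_subset (hullU n) (hLU j))
  -- `n (j + 1) = N j (n j)`
  let n : ℕ → ℕ := fun j => Nat.rec 0 N j
  have hLn (j : ℕ) : L j ⊆ PshHull φ U (L (n (j + 1))) :=
    (subset_union_right.trans (hN j (n j))).trans
      (interior_subset.trans (subset_pshHull (hLU _) (hLc _)))
  refine ⟨{ K := fun j => PshHull φ U (L (n j))
            isCompact := fun j => hhull _ (hLU _) (hLc _)
            subset := fun j => hullU _
            subset_interior_succ := fun j => (subset_union_left.trans (hN j (n j))).trans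
              (interior_mono (subset_pshHull (hLU _) (hLc _)))
            exists_mem := fun x hx => ?_
            separates := fun j y hy hyK => ?_ }⟩
  · obtain ⟨m, hm⟩ := hL {x} isCompact_singleton (singleton_subset_iff.2 hx)
    exact ⟨m + 1, hLn m (interior_subset (hm rfl))⟩
  · exact exists_psh_separating_of_notMem_pshHull hy hyK

namespace PshExhaustion

variable (E : PshExhaustion φ U)

theorem monotone : Monotone E.K :=
  monotone_nat_of_le_succ fun j => (E.subset_interior_succ j).trans interior_subset

theorem exists_mem_interior {x : V} (hx : x ∈ U) : ∃ j, x ∈ interior (E.K j) :=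
  let ⟨j, hj⟩ := E.exists_mem x hx
  ⟨j + 1, E.subset_interior_succ j hj⟩

variable {χ : ℕ → V → ℝ}

theorem hasSum_of_mem_interior (hχK : ∀ j, ∀ z ∈ E.K j, χ j z = 0) {n : ℕ} {x : V}
    (hx : x ∈ interior (E.K n)) : HasSum (fun j => χ j x) (∑ j ∈ Finset.range n, χ j x) :=
  hasSum_sum_of_ne_finset_zero fun j hj =>
    hχK j x (E.monotone (not_lt.1 (by simpa using hj)) (interior_subset hx))

theorem pshOn_tsum (hU : IsOpen U) (hχ : ∀ j, PshOn φ U (χ j))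
    (hχK : ∀ j, ∀ z ∈ E.K j, χ j z = 0) : PshOn φ U fun x => ∑' j, χ j x :=
  pshOn_of_locally hU fun _ hx =>
    let ⟨n, hn⟩ := E.exists_mem_interior hx
    ⟨_, PshOn.sum hU (Finset.range n) fun j _ => hχ j,
      eventually_of_mem (isOpen_interior.mem_nhds hn) fun _ hz =>
        (E.hasSum_of_mem_interior hχK hz).tsum_eq⟩

theorem le_tsum_of_notMem_interior (hχ0 : ∀ j z, 0 ≤ χ j z)
    (hχK : ∀ j, ∀ z ∈ E.K j, χ j z = 0)
    (hχA : ∀ j, ∀ z ∈ E.K (j + 2) \ interior (E.K (j + 1)), (j : ℝ) ≤ χ j z)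
    {x : V} (hx : x ∈ U) {j : ℕ} (hxj : x ∉ interior (E.K (j + 1))) :
    (j : ℝ) ≤ ∑' i, χ i x := by
  classical
  have hex := E.exists_mem_interior hx
  have hgt : j + 1 < Nat.find hex := by
    by_contra! h
    exact hxj (interior_mono (E.monotone h) (Nat.find_spec hex))
  obtain ⟨i, hi⟩ : ∃ i, Nat.find hex = i + 2 := ⟨Nat.find hex - 2, by omega⟩
  have hxA : x ∈ E.K (i + 2) \ interior (E.K (i + 1)) :=
    ⟨interior_subset (hi ▸ Nat.find_spec hex), Nat.find_min hex (by omega)⟩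
  have hsum := E.hasSum_of_mem_interior hχK (Nat.find_spec hex)
  calc (j : ℝ) ≤ i := by exact_mod_cast (by omega : j ≤ i)
    _ ≤ χ i x := hχA i x hxA
    _ ≤ ∑' k, χ k x := hsum.tsum_eq ▸ le_hasSum hsum i fun k _ => hχ0 k x

end PshExhaustion

theorem PshExhaustion.exists_psh_exhaustion (E : PshExhaustion φ U) (hU : IsOpen U) :
    ∃ f : V → ℝ, PshOn φ U f ∧ ∀ c : ℝ, IsCompact {x ∈ U | f x ≤ c} := by
  have hcutoff (j : ℕ) : ∃ χ, PshOn φ U χ ∧ (∀ z, 0 ≤ χ z) ∧ (∀ z ∈ E.K j, χ z = 0) ∧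
      ∀ z ∈ E.K (j + 2) \ interior (E.K (j + 1)), (j : ℝ) ≤ χ z :=
    exists_psh_cutoff hU ((E.isCompact _).diff isOpen_interior) (fun y hy => E.subset _ hy.1)
      (fun y hy => E.separates j y (E.subset _ hy.1) fun hyj => hy.2 (E.subset_interior_succ j hyj))
      j.cast_nonneg
  choose χ hχ hχ0 hχK hχA using hcutoff
  have hf := E.pshOn_tsum hU hχ hχK
  refine ⟨_, hf, fun c => ?_⟩
  obtain ⟨j, hj⟩ := exists_nat_gt c
  have hsub : {x ∈ U | ∑' i, χ i x ≤ c} ⊆ E.K (j + 1) := fun x hx => by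
    by_contra hxK
    have := E.le_tsum_of_notMem_interior hχ0 hχK hχA hx.1 fun h => hxK (interior_subset h)
    linarith [hx.2]
  exact isCompact_sublevel_of_subset (E.isCompact _) (E.subset _) hf.1.continuousOn hsub

end Exhaustion

theorem phiConvex_iff_exists_psh_exhaustion_general
    {V : Type*} [NormedAddCommGroup V] [InnerProductSpace ℝ V]
    [FiniteDimensional ℝ V] {p : ℕ}
    (φ : V [⋀^Fin p]→ₗ[ℝ] ℝ)
    (U : Set V) (hU : IsOpen U) :
    (∀ K : Set V, K ⊆ U → IsCompact K → IsCompact (PshHull φ U K)) ↔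
      ∃ f : V → ℝ, PshOn φ U f ∧ ∀ c : ℝ, IsCompact {x ∈ U | f x ≤ c} := by
  constructor
  · intro hhull
    exact (exists_pshExhaustion hU hhull).some.exists_psh_exhaustion hU
  · rintro ⟨f, hf, hfc⟩ K - -
    exact isCompact_pshHull_of_exhaustion hf hfc K

/-- **Theorem 3.3** (Harvey–Lawson), Euclidean parallel case.  `U` is `φ`-convex (hulls of
compact sets are compact) iff there exists a smooth `φ`-plurisubharmonic proper exhaustion
function on `U`. -/
theorem phiConvex_iff_exists_psh_exhaustion
    {V : Type*} [NormedAddCommGroup V] [InnerProductSpace ℝ V]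
    [FiniteDimensional ℝ V] {p : ℕ} (hp : 1 ≤ p)
    (φ : V [⋀^Fin p]→ₗ[ℝ] ℝ)
    (hcomass : ∀ u : Fin p → V, Orthonormal ℝ u → φ u ≤ 1)
    (U : Set V) (hU : IsOpen U) :
    (∀ K : Set V, K ⊆ U → IsCompact K → IsCompact (PshHull φ U K)) ↔
      ∃ f : V → ℝ, PshOn φ U f ∧ ∀ c : ℝ, IsCompact {x ∈ U | f x ≤ c} :=
  phiConvex_iff_exists_psh_exhaustion_general φ U hU
end
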